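/- Let X be a reflexive, strictly convex Banach space satisfying the uniform Kadec–Klee property (UKK). Then for any nonempty convex subsets A, B ⊆ X, the pair (A,B) has property WUC. -/

import Mathlib

open Filter Metric

/-- The distance between two sets: `inf {d(x,y) : x ∈ A, y ∈ B}`. -/
noncomputable def setDist {X : Type*} [PseudoMetricSpace X] (A B : Set X) : ℝ :=
  sInf (Set.image2 dist A B)

/-- Property WUC for a pair of subsets of a metric space. -/
def PropWUC {X : Type*} [MetricSpace X] (A B : Set X) : Prop :=
  ∀ x : ℕ → X, (∀ n, x n ∈ A) →
    (∀ ε > (0 : ℝ), ∃ y ∈ B, ∃ m₀ : ℕ, ∀ m ≥ m₀, dist (x m) y ≤ setDist A B + ε) →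
    ∃ z, Tendsto x atTop (nhds z)

/-- The sequence `x` converges weakly to `z`. -/
def WeakTendsto {X : Type*} [NormedAddCommGroup X] [NormedSpace ℝ X]
    (x : ℕ → X) (z : X) : Prop :=
  ∀ f : X →L[ℝ] ℝ, Tendsto (fun n => f (x n)) atTop (nhds (f z))

/-- `X` is reflexive: the canonical embedding into the double dual is surjective. -/
def ReflexiveSpace (X : Type*) [NormedAddCommGroup X] [NormedSpace ℝ X] : Prop :=
  Function.Surjective (NormedSpace.inclusionInDoubleDual ℝ X)

/-- `X` has the uniform Kadec-Klee property: for every `ε > 0` there is `η > 0` such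
that every weak limit `z` of a sequence in the closed unit ball staying at distance at
least `ε` from `z` satisfies `‖z‖ ≤ 1 - η`. -/
def UKKProperty (X : Type*) [NormedAddCommGroup X] [NormedSpace ℝ X] : Prop :=
  ∀ ε > (0 : ℝ), ∃ η > (0 : ℝ), ∀ (x : ℕ → X) (z : X),
    (∀ n, ‖x n‖ ≤ 1) → (∀ n, ε ≤ ‖x n - z‖) → WeakTendsto x z → ‖z‖ ≤ 1 - η

open Topology

/-!
If `dist(A, B) = 0`, the WUC hypothesis makes the sequence Cauchy. Otherwise pick `y k ∈ B` with
`x m` eventually within `d + 1/(k+1)` of `y k`; by reflexivity a subsequence of `y` converges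
weakly to some `p ∈ closure B`. Every subsequence of `x` has a further subsequence converging
weakly to some `z ∈ closure A`, and weak lower semicontinuity of the norm gives `‖z - p‖ = d`.
UKK upgrades this weak convergence to norm convergence: otherwise, rescaling the balls around the
`y k`, the weak limit `z` would lie strictly inside them and hence closer than `d` to `B`.
Finally, strict convexity makes the nearest point of `closure A` to `p` unique, so all these limits
coincide and the whole sequence converges.
-/

namespace WeakTendsto

variable {X : Type*} [NormedAddCommGroup X] [NormedSpace ℝ X] {v : ℕ → X} {z : X}

lemma comp (h : WeakTendsto v z) {φ : ℕ → ℕ} (hφ : Tendsto φ atTop atTop) :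
    WeakTendsto (v ∘ φ) z :=
  fun f => (h f).comp hφ

lemma sub_const (h : WeakTendsto v z) (w : X) : WeakTendsto (fun n => v n - w) (z - w) :=
  fun f => by simpa only [map_sub] using (h f).sub_const (f w)

lemma const_sub (h : WeakTendsto v z) (w : X) : WeakTendsto (fun n => w - v n) (w - z) :=
  fun f => by simpa only [map_sub] using (h f).const_sub (f w)

lemma const_smul (h : WeakTendsto v z) (c : ℝ) : WeakTendsto (fun n => c • v n) (c • z) :=
  fun f => by simpa only [map_smul, smul_eq_mul] using (h f).const_mul c

lemma norm_le_of_tendsto (h : WeakTendsto v z) {c : ℕ → ℝ} {L : ℝ}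
    (hc : Tendsto c atTop (𝓝 L)) (hvc : ∀ᶠ n in atTop, ‖v n‖ ≤ c n) : ‖z‖ ≤ L := by
  have hL : 0 ≤ L := ge_of_tendsto hc (hvc.mono fun n hn => (norm_nonneg _).trans hn)
  refine NormedSpace.norm_le_dual_bound ℝ z hL fun f => ?_
  refine le_of_tendsto_of_tendsto (h f).norm (hc.mul_const ‖f‖) ?_
  filter_upwards [hvc] with n hn
  calc ‖f (v n)‖ ≤ ‖f‖ * ‖v n‖ := f.le_opNorm _
    _ ≤ c n * ‖f‖ := by rw [mul_comm]; gcongr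

lemma mem_closure_of_convex (h : WeakTendsto v z) {A : Set X} (hA : Convex ℝ A)
    (hv : ∀ n, v n ∈ A) : z ∈ closure A := by
  by_contra hz
  obtain ⟨f, u, hfu, huz⟩ := geometric_hahn_banach_closed_point hA.closure isClosed_closure hz
  exact huz.not_ge <| le_of_tendsto (h f) <| .of_forall fun n => (hfu _ (subset_closure (hv n))).le

end WeakTendsto

section Reflexive

open TopologicalSpace NormedSpace

variable {X : Type*} [NormedAddCommGroup X] [NormedSpace ℝ X]

lemma Submodule.exists_strongDual_eq_zero_of_notMem {M : Submodule ℝ X}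
    (hM : IsClosed (M : Set X)) {z : X} (hz : z ∉ M) :
    ∃ f : StrongDual ℝ X, (∀ y ∈ M, f y = 0) ∧ f z ≠ 0 := by
  obtain ⟨g, hg⟩ := SeparatingDual.exists_ne_zero (R := ℝ) (x := M.mkQ z)
    (by simpa [Submodule.Quotient.mk_eq_zero] using hz)
  exact ⟨g.comp M.mkQL, fun y hy => by simp [(Submodule.Quotient.mk_eq_zero M).2 hy], hg⟩

lemma separableSpace_of_separableSpace_strongDual [SeparableSpace (StrongDual ℝ X)] :
    SeparableSpace X := by
  have : Nonempty (StrongDual ℝ X) := ⟨0⟩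
  set g := denseSeq (StrongDual ℝ X)
  have hnorming : ∀ n, ∃ w : X, ‖w‖ ≤ 1 ∧ ‖g n‖ / 2 ≤ ‖g n w‖ := fun n => by
    obtain hgn | hgn := eq_or_ne (g n) 0
    · exact ⟨0, by simp [hgn]⟩
    · obtain ⟨w, hw, hgw⟩ := (g n).exists_lt_apply_of_lt_opNorm
        (half_lt_self (norm_pos_iff.2 hgn))
      exact ⟨w, hw.le, hgw.le⟩
  choose w hw1 hw using hnorming
  -- a `g n` close to `f ≠ 0` would satisfy `‖g n‖ / 2 ≤ ‖(g n - f) (w n)‖ ≤ ‖f‖ / 3`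
  have hann : ∀ f : StrongDual ℝ X, (∀ n, f (w n) = 0) → f = 0 := by
    intro f hf
    by_contra hf0
    obtain ⟨n, hn⟩ := (denseRange_denseSeq (StrongDual ℝ X)).exists_dist_lt f
      (div_pos (norm_pos_iff.2 hf0) three_pos)
    rw [dist_eq_norm] at hn
    have hgf : ‖g n (w n)‖ ≤ ‖f - g n‖ := by
      calc ‖g n (w n)‖ = ‖(f - g n) (w n)‖ := by simp [hf n]
        _ ≤ ‖f - g n‖ * ‖w n‖ := (f - g n).le_opNorm _
        _ ≤ ‖f - g n‖ := mul_le_of_le_one_right (norm_nonneg _) (hw1 n)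
    have := norm_sub_norm_le f (g n)
    linarith [hw n]
  set M := (Submodule.span ℝ (Set.range w)).topologicalClosure
  have hM : ∀ x, x ∈ M := by
    intro x
    by_contra hx
    obtain ⟨f, hfM, hfx⟩ :=
      Submodule.exists_strongDual_eq_zero_of_notMem (Submodule.isClosed_topologicalClosure _) hx
    have hf : f = 0 :=
      hann f fun n => hfM _ (Submodule.le_topologicalClosure _ (Submodule.subset_span ⟨n, rfl⟩))
    exact hfx (by simp [hf])
  exact isSeparable_univ_iff.1
    ((Set.countable_range w).isSeparable.span.closure.mono fun x _ => hM x)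

lemma ReflexiveSpace.submodule_of_isClosed (hrefl : ReflexiveSpace X) {Y : Submodule ℝ X}
    (hY : IsClosed (Y : Set X)) : ReflexiveSpace Y := by
  intro φ
  set restrict : StrongDual ℝ X →L[ℝ] StrongDual ℝ Y :=
    (ContinuousLinearMap.compL ℝ Y X ℝ).flip Y.subtypeL
  obtain ⟨z, hz⟩ := hrefl (φ.comp restrict)
  have hφz : ∀ f : StrongDual ℝ X, f z = φ (restrict f) := fun f => congrArg (· f) hz
  have hzY : z ∈ Y := by
    by_contra hzY
    obtain ⟨f, hfY, hfz⟩ := Y.exists_strongDual_eq_zero_of_notMem hY hzY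
    have hf : restrict f = 0 := ContinuousLinearMap.ext fun y => hfY y y.2
    exact hfz (by rw [hφz, hf, map_zero])
  refine ⟨⟨z, hzY⟩, ContinuousLinearMap.ext fun g => ?_⟩
  obtain ⟨f, hfg, -⟩ := exists_extension_norm_eq Y g
  have hf : restrict f = g := ContinuousLinearMap.ext hfg
  rw [dual_def, ← hfg, ← hf, ← hφz]

lemma ReflexiveSpace.separableSpace_strongDual [SeparableSpace X] (hrefl : ReflexiveSpace X) :
    SeparableSpace (StrongDual ℝ X) :=
  have := hrefl.denseRange.separableSpace (inclusionInDoubleDual ℝ X).continuous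
  separableSpace_of_separableSpace_strongDual

lemma ReflexiveSpace.exists_weakTendsto_of_separableSpace [SeparableSpace X]
    (hrefl : ReflexiveSpace X) {u : ℕ → X} {C : ℝ} (hu : ∀ n, ‖u n‖ ≤ C) :
    ∃ φ : ℕ → ℕ, StrictMono φ ∧ ∃ z, WeakTendsto (u ∘ φ) z := by
  have := hrefl.separableSpace_strongDual
  obtain ⟨Φ, -, φ, hφ, hΦ⟩ := WeakDual.isSeqCompact_closedBall ℝ (StrongDual ℝ X) 0 C
    (x := fun n => StrongDual.toWeakDual (inclusionInDoubleDual ℝ X (u n)))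
    fun n => by simpa using (double_dual_bound ℝ X (u n)).trans (hu n)
  obtain ⟨z, hz⟩ := hrefl (WeakDual.toStrongDual Φ)
  refine ⟨φ, hφ, z, fun f => ?_⟩
  have hΦz : Φ f = f z := (congrArg (· f) hz).symm
  rw [← hΦz]
  exact ((WeakDual.eval_continuous f).tendsto Φ).comp hΦ

lemma ReflexiveSpace.exists_weakTendsto (hrefl : ReflexiveSpace X) {u : ℕ → X} {C : ℝ}
    (hu : ∀ n, ‖u n‖ ≤ C) : ∃ φ : ℕ → ℕ, StrictMono φ ∧ ∃ z, WeakTendsto (u ∘ φ) z := by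
  set Y := (Submodule.span ℝ (Set.range u)).topologicalClosure
  have hY : IsClosed (Y : Set X) := Submodule.isClosed_topologicalClosure _
  have : SeparableSpace Y := ((Set.countable_range u).isSeparable.span.closure).separableSpace
  have huY : ∀ n, u n ∈ Y :=
    fun n => Submodule.le_topologicalClosure _ (Submodule.subset_span ⟨n, rfl⟩)
  obtain ⟨φ, hφ, z, hz⟩ := (hrefl.submodule_of_isClosed hY).exists_weakTendsto_of_separableSpace
    (u := fun n => ⟨u n, huY n⟩) hu
  exact ⟨φ, hφ, z, fun f => hz (f.comp Y.subtypeL)⟩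

end Reflexive

section SetDist

variable {X : Type*} [PseudoMetricSpace X] {A B : Set X} {a b : X}

lemma setDist_nonneg (A B : Set X) : 0 ≤ setDist A B :=
  Real.sInf_nonneg <| by rintro _ ⟨a, -, b, -, rfl⟩; exact dist_nonneg

lemma setDist_le_dist (ha : a ∈ A) (hb : b ∈ B) : setDist A B ≤ dist a b :=
  csInf_le ⟨0, by rintro _ ⟨a, -, b, -, rfl⟩; exact dist_nonneg⟩ (Set.mem_image2_of_mem ha hb)

lemma setDist_le_dist_of_mem_closure (ha : a ∈ closure A) (hb : b ∈ closure B) :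
    setDist A B ≤ dist a b := by
  have hclosed : IsClosed {p : X × X | setDist A B ≤ dist p.1 p.2} :=
    isClosed_le continuous_const continuous_dist
  have hAB : A ×ˢ B ⊆ {p : X × X | setDist A B ≤ dist p.1 p.2} :=
    fun p hp => setDist_le_dist hp.1 hp.2
  exact hclosed.closure_subset_iff.2 hAB (closure_prod_eq (s := A) (t := B) ▸ Set.mk_mem_prod ha hb)

end SetDist

lemma exists_forall_norm_le_of_eventually_norm_sub_le {X : Type*} [SeminormedAddGroup X]
    {x y : ℕ → X} {r : ℕ → ℝ} {C : ℝ} (hrC : ∀ k, r k ≤ C)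
    (hxy : ∀ k, ∀ᶠ n in atTop, ‖x n - y k‖ ≤ r k) :
    ∃ R, (∀ n, ‖x n‖ ≤ R) ∧ ∀ k, ‖y k‖ ≤ R := by
  have hx : ∀ᶠ n in atTop, ‖x n‖ ≤ ‖y 0‖ + C := (hxy 0).mono fun n hn =>
    (norm_le_norm_add_norm_sub' (x n) (y 0)).trans (by linarith [hrC 0])
  obtain ⟨R, hR⟩ := (isBoundedUnder_of_eventually_le hx).bddAbove_range
  have hxR : ∀ n, ‖x n‖ ≤ R := fun n => hR ⟨n, rfl⟩
  refine ⟨R + |C|, fun n => by linarith [hxR n, abs_nonneg C], fun k => ?_⟩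
  obtain ⟨n, hn⟩ := (hxy k).exists
  linarith [norm_le_norm_add_norm_sub (x n) (y k), hxR n, hrC k, le_abs_self C]

lemma cauchySeq_of_forall_eventually_dist_le {X : Type*} [PseudoMetricSpace X] {x : ℕ → X}
    (h : ∀ ε > 0, ∃ y, ∀ᶠ m in atTop, dist (x m) y ≤ ε) : CauchySeq x := by
  refine Metric.cauchySeq_iff'.2 fun ε hε => ?_
  obtain ⟨y, hy⟩ := h (ε / 3) (by positivity)
  obtain ⟨N, hN⟩ := eventually_atTop.1 hy
  refine ⟨N, fun n hn => ?_⟩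
  calc dist (x n) (x N) ≤ dist (x n) y + dist (x N) y := dist_triangle_right _ _ _
    _ ≤ ε / 3 + ε / 3 := add_le_add (hN n hn) (hN N le_rfl)
    _ < ε := by linarith

lemma propWUC_of_setDist_eq_zero {X : Type*} [MetricSpace X] [CompleteSpace X] {A B : Set X}
    (h : setDist A B = 0) : PropWUC A B := by
  refine fun x _ hx => cauchySeq_tendsto_of_complete
    (cauchySeq_of_forall_eventually_dist_le fun ε hε => ?_)
  obtain ⟨y, -, m₀, hm⟩ := hx ε hε
  exact ⟨y, eventually_atTop.2 ⟨m₀, fun m hm' => by simpa [h] using hm m hm'⟩⟩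

lemma Convex.eq_of_norm_sub_eq_of_forall_le {X : Type*} [NormedAddCommGroup X] [NormedSpace ℝ X]
    [StrictConvexSpace ℝ X] {C : Set X} (hC : Convex ℝ C) {p z₁ z₂ : X} {d : ℝ}
    (h₁ : z₁ ∈ C) (h₂ : z₂ ∈ C) (hd₁ : ‖z₁ - p‖ = d) (hd₂ : ‖z₂ - p‖ = d)
    (hmin : ∀ z ∈ C, d ≤ ‖z - p‖) : z₁ = z₂ := by
  by_contra hne
  have hmid : (1 / 2 : ℝ) • (z₁ + z₂) ∈ C := by
    simpa [smul_add] using hC h₁ h₂ (by norm_num : (0 : ℝ) ≤ 1 / 2) (by norm_num) (by norm_num)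
  have hlt := (norm_midpoint_lt_iff (hd₁.trans hd₂.symm)).2 (sub_left_injective.ne hne)
  have hsub : (1 / 2 : ℝ) • (z₁ - p + (z₂ - p)) = (1 / 2 : ℝ) • (z₁ + z₂) - p := by module
  rw [hsub, hd₁] at hlt
  exact hlt.not_ge (hmin _ hmid)

namespace UKKProperty

variable {X : Type*} [NormedAddCommGroup X] [NormedSpace ℝ X]

lemma exists_norm_le_mul (hUKK : UKKProperty X) {ε : ℝ} (hε : 0 < ε) :
    ∃ η > (0 : ℝ), ∀ {c : ℝ} {v : ℕ → X} {z : X}, 0 < c → (∀ᶠ n in atTop, ‖v n‖ ≤ c) →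
      (∀ᶠ n in atTop, ε * c ≤ ‖v n - z‖) → WeakTendsto v z → ‖z‖ ≤ (1 - η) * c := by
  obtain ⟨η, hη, hUKKε⟩ := hUKK ε hε
  refine ⟨η, hη, fun {c v z} hc hvc hvz hv => ?_⟩
  obtain ⟨N, hN⟩ := eventually_atTop.1 (hvc.and hvz)
  have hscale := hUKKε (fun n => c⁻¹ • v (n + N)) (c⁻¹ • z)
    (fun n => by
      rw [norm_smul, norm_inv, Real.norm_of_nonneg hc.le, inv_mul_le_iff₀ hc, mul_one]
      exact (hN _ (Nat.le_add_left N n)).1)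
    (fun n => by
      rw [← smul_sub, norm_smul, norm_inv, Real.norm_of_nonneg hc.le, le_inv_mul_iff₀ hc,
        mul_comm]
      exact (hN _ (Nat.le_add_left N n)).2)
    ((hv.comp (tendsto_add_atTop_nat N)).const_smul c⁻¹)
  rwa [norm_smul, norm_inv, Real.norm_of_nonneg hc.le, inv_mul_le_iff₀ hc, mul_comm] at hscale

lemma tendsto_of_weakTendsto (hUKK : UKKProperty X) {d : ℝ} (hd : 0 < d) {v : ℕ → X} {z : X}
    (hv : WeakTendsto v z) {y : ℕ → X} {r : ℕ → ℝ} (hr : Tendsto r atTop (𝓝 d))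
    (hvy : ∀ k, ∀ᶠ n in atTop, ‖v n - y k‖ ≤ r k) (hzy : ∀ k, d ≤ ‖z - y k‖) :
    Tendsto v atTop (𝓝 z) := by
  by_contra hvz
  obtain ⟨ε, hε, hfar⟩ : ∃ ε > 0, ∃ᶠ n in atTop, ε ≤ ‖v n - z‖ := by
    simpa [Metric.tendsto_atTop, frequently_atTop, dist_eq_norm] using hvz
  obtain ⟨ψ, hψ, hψz⟩ := extraction_of_frequently_atTop hfar
  obtain ⟨η, hη, hUKKη⟩ := hUKK.exists_norm_le_mul (div_pos hε (by linarith : 0 < d + 1))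
  obtain ⟨k, hk₀, hk₁, hkη⟩ : ∃ k, 0 < r k ∧ r k ≤ d + 1 ∧ (1 - η) * r k < d :=
    ((hr.eventually_const_lt hd).and ((hr.eventually_le_const (by linarith)).and
      ((hr.const_mul (1 - η)).eventually_lt_const (by nlinarith)))).exists
  have hzyk := hUKKη hk₀ ((hvy k).filter_mono hψ.tendsto_atTop)
    (.of_forall fun n => ?_) ((hv.comp hψ.tendsto_atTop).sub_const (y k))
  · linarith [hzy k]
  · calc ε / (d + 1) * r k ≤ ε := by
          rw [div_mul_eq_mul_div, div_le_iff₀ (by linarith)]; gcongr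
      _ ≤ ‖v (ψ n) - y k - (z - y k)‖ := by rw [sub_sub_sub_cancel_right]; exact hψz n

lemma exists_subseq_tendsto_of_reflexiveSpace (hUKK : UKKProperty X) (hrefl : ReflexiveSpace X)
    {A : Set X} (hA : Convex ℝ A) {d R : ℝ} (hd : 0 < d) {x y : ℕ → X} {r : ℕ → ℝ}
    (hxA : ∀ n, x n ∈ A) (hxR : ∀ n, ‖x n‖ ≤ R) (hr : Tendsto r atTop (𝓝 d))
    (hxy : ∀ k, ∀ᶠ n in atTop, ‖x n - y k‖ ≤ r k) (hAy : ∀ k, ∀ a ∈ closure A, d ≤ ‖a - y k‖)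
    {ψ : ℕ → ℕ} (hψ : StrictMono ψ) {p : X} (hp : WeakTendsto (y ∘ ψ) p)
    (hAp : ∀ a ∈ closure A, d ≤ ‖a - p‖) :
    ∃ φ : ℕ → ℕ, StrictMono φ ∧ ∃ z ∈ closure A, ‖z - p‖ = d ∧ Tendsto (x ∘ φ) atTop (𝓝 z) := by
  obtain ⟨φ, hφ, z, hz⟩ := hrefl.exists_weakTendsto hxR
  have hzA : z ∈ closure A := hz.mem_closure_of_convex hA fun n => hxA _
  have hxφy : ∀ k, ∀ᶠ n in atTop, ‖x (φ n) - y k‖ ≤ r k :=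
    fun k => (hxy k).filter_mono hφ.tendsto_atTop
  have hzy : ∀ k, ‖z - y k‖ ≤ r k :=
    fun k => (hz.sub_const (y k)).norm_le_of_tendsto tendsto_const_nhds (hxφy k)
  have hzp : ‖z - p‖ ≤ d := (hp.const_sub z).norm_le_of_tendsto (hr.comp hψ.tendsto_atTop)
    (.of_forall fun j => hzy (ψ j))
  exact ⟨φ, hφ, z, hzA, le_antisymm hzp (hAp z hzA),
    hUKK.tendsto_of_weakTendsto hd hz hr hxφy fun k => hAy k z hzA⟩

end UKKProperty

theorem prop_WUC_of_UKK_general {X : Type*} [NormedAddCommGroup X] [NormedSpace ℝ X]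
    [CompleteSpace X] [StrictConvexSpace ℝ X]
    (hrefl : ReflexiveSpace X) (hUKK : UKKProperty X)
    (A B : Set X)
    (hAconv : Convex ℝ A) (hBconv : Convex ℝ B) :
    PropWUC A B := by
  obtain hd | hd := (setDist_nonneg A B).eq_or_lt
  · exact propWUC_of_setDist_eq_zero hd.symm
  intro x hxA hx
  set d := setDist A B
  choose y hyB m₀ hm using fun k : ℕ => hx (1 / (k + 1)) Nat.one_div_pos_of_nat
  have hxy : ∀ k, ∀ᶠ n in atTop, ‖x n - y k‖ ≤ d + 1 / ((k : ℝ) + 1) :=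
    fun k => eventually_atTop.2 ⟨m₀ k, fun n hn => dist_eq_norm (x n) (y k) ▸ hm k n hn⟩
  have hr : Tendsto (fun k : ℕ => d + 1 / ((k : ℝ) + 1)) atTop (𝓝 d) := by
    simpa using (tendsto_const_nhds (x := d)).add tendsto_one_div_add_atTop_nhds_zero_nat
  obtain ⟨R, hxR, hyR⟩ := exists_forall_norm_le_of_eventually_norm_sub_le (C := d + 1)
    (fun k => by gcongr; exact div_le_one_of_le₀ (by simp) (by positivity)) hxy
  have hAB : ∀ a ∈ closure A, ∀ b ∈ closure B, d ≤ ‖a - b‖ :=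
    fun a ha b hb => dist_eq_norm a b ▸ setDist_le_dist_of_mem_closure ha hb
  obtain ⟨ψ, hψ, p, hp⟩ := hrefl.exists_weakTendsto hyR
  have hAp : ∀ a ∈ closure A, d ≤ ‖a - p‖ :=
    fun a ha => hAB a ha p (hp.mem_closure_of_convex hBconv fun j => hyB _)
  have hAy : ∀ k, ∀ a ∈ closure A, d ≤ ‖a - y k‖ :=
    fun k a ha => hAB a ha _ (subset_closure (hyB k))
  obtain ⟨-, -, z, hzA, hzp, -⟩ := hUKK.exists_subseq_tendsto_of_reflexiveSpace hrefl hAconv hd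
    hxA hxR hr hxy hAy hψ hp hAp
  refine ⟨z, tendsto_of_subseq_tendsto fun ns hns => ?_⟩
  obtain ⟨φ, -, z', hz'A, hz'p, hφ⟩ := hUKK.exists_subseq_tendsto_of_reflexiveSpace hrefl hAconv
    hd (fun n => hxA (ns n)) (fun n => hxR (ns n)) hr (fun k => (hxy k).filter_mono hns) hAy hψ hp
    hAp
  rw [hAconv.closure.eq_of_norm_sub_eq_of_forall_le hz'A hzA hz'p hzp hAp] at hφ
  exact ⟨φ, hφ⟩

theorem prop_WUC_of_UKK {X : Type*} [NormedAddCommGroup X] [NormedSpace ℝ X]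
    [CompleteSpace X] [StrictConvexSpace ℝ X]
    (hrefl : ReflexiveSpace X) (hUKK : UKKProperty X)
    (A B : Set X) (hA : A.Nonempty) (hB : B.Nonempty)
    (hAconv : Convex ℝ A) (hBconv : Convex ℝ B) :
    PropWUC A B :=
  prop_WUC_of_UKK_general hrefl hUKK A B hAconv hBconv
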